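/- arXiv:0909.2388 — 3 statements merged into one kernel-verified Lean document; each statement's English description precedes it below -/
import Mathlib

section
/- For any nonempty finite set A of integers and any positive integer n, E_A(n) ≥ D_A(n) + n − 1. -/
/-!
Let `d = D_A(n) - 1` and take a sequence `x` of length `d` without a nonempty `A`-weighted
zero sum. Appending `n - 1` zeros gives a sequence of length `d + n - 1`. If `E_A(n)` were at most
that length, some `n` of its terms would have an `A`-weighted zero sum; at most `n - 1` of them are
the appended zeros, so the terms taken from `x` form a nonempty weighted zero sum of `x`, which is
impossible.
-/

open Finset

section WeightedZeroSum

variable {ι κ R M : Type*} [Semiring R] [AddCommMonoid M] [Module R M]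

def HasWeightedZeroSum (A : Set R) (x : ι → M) : Prop :=
  ∃ (s : Finset ι) (w : ι → R), s.Nonempty ∧ (∀ i ∈ s, w i ∈ A) ∧ ∑ i ∈ s, w i • x i = 0

def HasWeightedZeroSumOfCard (A : Set R) (n : ℕ) (x : ι → M) : Prop :=
  ∃ (s : Finset ι) (w : ι → R), s.card = n ∧ (∀ i ∈ s, w i ∈ A) ∧ ∑ i ∈ s, w i • x i = 0

theorem HasWeightedZeroSum.nonempty {A : Set R} {x : ι → M} (h : HasWeightedZeroSum A x) :
    Nonempty ι :=
  let ⟨_, _, hs, _⟩ := h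
  hs.to_subtype.map Subtype.val

theorem HasWeightedZeroSumOfCard.of_comp_embedding {A : Set R} {n : ℕ} {x : κ → M} (f : ι ↪ κ)
    (h : HasWeightedZeroSumOfCard A n (x ∘ f)) : HasWeightedZeroSumOfCard A n x := by
  obtain ⟨s, w, hcard, hA, hsum⟩ := h
  have hw : ∀ i, Function.extend f w 0 (f i) = w i := f.injective.extend_apply w 0
  refine ⟨s.map f, Function.extend f w 0, by rw [card_map, hcard], ?_, ?_⟩
  · simpa only [forall_mem_map, hw] using hA
  · simpa only [sum_map, hw, Function.comp_apply] using hsum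

theorem HasWeightedZeroSumOfCard.comp_embedding [Fintype ι] [Fintype κ] {A : Set R} {n : ℕ}
    {x : κ → M} (h : HasWeightedZeroSumOfCard A n x) (f : ι ↪ κ)
    (hx : ∀ k ∉ Set.range f, x k = 0) (hcard : Fintype.card κ < Fintype.card ι + n) :
    HasWeightedZeroSum A (x ∘ f) := by
  classical
  obtain ⟨s, w, rfl, hA, hsum⟩ := h
  have hinj : Set.InjOn f (f ⁻¹' s) := f.injective.injOn
  refine ⟨s.preimage f hinj, w ∘ f, ?_, fun i hi => hA _ (mem_preimage.1 hi), ?_⟩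
  · by_contra hempty
    have hsub : s ⊆ (univ.map f)ᶜ := fun k hk => by
      simp only [mem_compl, mem_map, mem_univ, true_and, not_exists]
      rintro i rfl
      exact hempty ⟨i, mem_preimage.2 hk⟩
    have := card_le_card hsub
    rw [card_compl, card_map, card_univ] at this
    have := Fintype.card_le_of_embedding f
    omega
  · rw [← hsum]
    exact sum_preimage f s hinj (fun k => w k • x k) fun k _ hk => by rw [hx k hk, smul_zero]

theorem HasWeightedZeroSumOfCard.of_append_zero {A : Set R} {n d m : ℕ} {x : Fin d → M}
    (h : HasWeightedZeroSumOfCard A n (Fin.append x (0 : Fin m → M))) (hm : m < n) :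
    HasWeightedZeroSum A x := by
  have hzero : ∀ k ∉ Set.range (Fin.castAddEmb m), Fin.append x (0 : Fin m → M) k = 0 := by
    intro k hk
    induction k using Fin.addCases with
    | left i => exact absurd ⟨i, rfl⟩ hk
    | right j => rw [Fin.append_right, Pi.zero_apply]
  have hcard : Fintype.card (Fin (d + m)) < Fintype.card (Fin d) + n := by
    simp only [Fintype.card_fin]
    omega
  have hrestrict : Fin.append x (0 : Fin m → M) ∘ Fin.castAddEmb m = x :=
    funext (Fin.append_left x 0)
  simpa only [hrestrict] using h.comp_embedding (Fin.castAddEmb m) hzero hcard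

end WeightedZeroSum

theorem weighted_EGZ_lower_bound_general (n : ℕ) (hn : 0 < n) (A : Finset ℤ)
    (D E : ℕ)
    (hD : IsLeast {k : ℕ | ∀ x : Fin k → ZMod n, ∃ (s : Finset (Fin k)) (w : Fin k → ℤ),
      s.Nonempty ∧ (∀ i ∈ s, w i ∈ A) ∧ ∑ i ∈ s, w i • x i = 0} D)
    (hE : IsLeast {k : ℕ | ∀ x : Fin k → ZMod n, ∃ (s : Finset (Fin k)) (w : Fin k → ℤ),
      s.card = n ∧ (∀ i ∈ s, w i ∈ A) ∧ ∑ i ∈ s, w i • x i = 0} E) :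
    E ≥ D + n - 1 := by
  have hD_pos : 0 < D :=
    Fin.pos_iff_nonempty.2 (HasWeightedZeroSum.nonempty (A := (A : Set ℤ)) (hD.1 fun _ => 0))
  obtain ⟨d, rfl⟩ := Nat.exists_eq_add_of_le' hD_pos
  by_contra! hlt
  suffices hd : d ∈ {k : ℕ | ∀ x : Fin k → ZMod n, HasWeightedZeroSum (A : Set ℤ) x} by
    have := hD.2 hd
    omega
  intro x
  have hpad : HasWeightedZeroSumOfCard (A : Set ℤ) n (Fin.append x (0 : Fin (n - 1) → ZMod n)) :=
    .of_comp_embedding (Fin.castLEEmb (by omega)) (hE.1 _)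
  exact hpad.of_append_zero (by omega)

/-- For any nonempty finite set `A ⊆ ℤ` and positive integer `n`,
`E_A(n) ≥ D_A(n) + n - 1`, where `D` and `E` are characterized as the least
elements of the corresponding sets. -/
theorem weighted_EGZ_lower_bound (n : ℕ) (hn : 0 < n) (A : Finset ℤ) (hA : A.Nonempty)
    (D E : ℕ)
    (hD : IsLeast {k : ℕ | ∀ x : Fin k → ZMod n, ∃ (s : Finset (Fin k)) (w : Fin k → ℤ),
      s.Nonempty ∧ (∀ i ∈ s, w i ∈ A) ∧ ∑ i ∈ s, w i • x i = 0} D)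
    (hE : IsLeast {k : ℕ | ∀ x : Fin k → ZMod n, ∃ (s : Finset (Fin k)) (w : Fin k → ℤ),
      s.card = n ∧ (∀ i ∈ s, w i ∈ A) ∧ ∑ i ∈ s, w i • x i = 0} E) :
    E ≥ D + n - 1 :=
  weighted_EGZ_lower_bound_general n hn A D E hD hE
end

section
/- Let G be a finite abelian group of order n, exponent m, and Davenport constant D(G). For every sequence S in G with |S| ≥ n + D(G) − 1, we have 0 ∈ Σ_{km}(S) for every integer k with 1 ≤ k ≤ (|S| + 1 − D(G))/m. -/
/-!
Translate the sequence so that a most frequent value becomes `0`; as `m • g = 0` for all `g`,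
this does not change which subsequences of length `k * m` sum to zero. Let `h` be the number of
zeros. By Gao's lemma (proved with Scherk's theorem), at least `|G|` nonzero terms, no value
occurring more than `h` times, contain a nonempty zero-sum subsequence of length `≤ h`. Peeling
such blocks off the nonzero terms until a remainder `R` with `|R| < |G|` is left, unions of blocks
padded with zeros realise every length up to `t - |R|`. Longer lengths are reached by adding a
zero-sum subsequence of `R` whose length is prescribed up to an error `≤ D`, found in the same
greedy way from the definition of `D`; the bound `|R| + D ≤ t` keeps its length `≤ k * m`.
-/

open Finset Pointwise

namespace Finset

theorem scherk {G : Type*} [AddCommGroup G] [DecidableEq G] {A B : Finset G} (hA : 0 ∈ A)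
    (hB : 0 ∈ B) (hAB : ∀ a ∈ A, ∀ b ∈ B, a + b = 0 → a = 0) : #A + #B ≤ #(A + B) + 1 := by
  induction B using strongInduction generalizing A with
  | H B ih =>
  obtain hB0 | ⟨b, hbB, hb0⟩ : B = {0} ∨ ∃ b ∈ B, b ≠ 0 := by
    by_contra! h
    exact h.1 (eq_singleton_iff_unique_mem.2 ⟨hB, h.2⟩)
  · simp [hB0]
  -- If `A + b ⊆ A` then `A + b = A ∋ 0`, and `a + b = 0` with `a ∈ A` forces `b = 0`.
  obtain ⟨a, ha, hab⟩ : ∃ a ∈ A, a + b ∉ A := by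
    by_contra! hclosed
    have himage : A.image (· + b) = A :=
      eq_of_subset_of_card_le (image_subset_iff.2 hclosed)
        (card_image_of_injective _ (add_left_injective b)).ge
    obtain ⟨a, ha, hab⟩ := mem_image.1 (show (0 : G) ∈ A.image (· + b) by rwa [himage])
    obtain rfl := hAB a ha b hbB hab
    exact hb0 (by simpa using hab)
  set e := addDysonETransform a (A, B)
  have hmem₁ : ∀ {c}, c ∈ e.1 ↔ c ∈ A ∨ ∃ b ∈ B, a + b = c := by
    intro c
    simp [e, mem_vadd_finset]
  have hmem₂ : ∀ {c}, c ∈ e.2 ↔ c ∈ B ∧ a + c ∈ A := by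
    intro c
    simp [e, mem_vadd_finset, neg_add_eq_iff_eq_add]
  have hssub : e.2 ⊂ B :=
    ssubset_iff_subset_ne.2 ⟨fun c hc => (hmem₂.1 hc).1, fun h => hab (hmem₂.1 (h ▸ hbB)).2⟩
  have he : #e.1 + #e.2 ≤ #(e.1 + e.2) + 1 := by
    refine ih _ hssub (hmem₁.2 (.inl hA)) (hmem₂.2 ⟨hB, by simpa⟩) ?_
    rintro c hc d hd hcd
    obtain ⟨hdB, hadA⟩ := hmem₂.1 hd
    obtain hcA | ⟨b', hb'B, rfl⟩ := hmem₁.1 hc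
    · exact hAB c hcA d hdB hcd
    · have had : a + d = 0 := hAB _ hadA b' hb'B (by rw [← hcd]; abel)
      obtain rfl := hAB a ha d hdB had
      rw [zero_add] at had
      simpa [had] using hcd
  have hcard : #e.1 + #e.2 = #A + #B := addDysonETransform.card a (A, B)
  have hsub : #(e.1 + e.2) ≤ #(A + B) := card_le_card (addDysonETransform.subset a (A, B))
  omega

section Gao

variable {G ι : Type*} [DecidableEq G]

def subsetSumsOfCardLE [AddCommMonoid G] (y : ι → G) (s : Finset ι) (j : ℕ) : Finset G :=
  {T ∈ s.powerset | #T ≤ j}.image fun T => ∑ i ∈ T, y i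

def valuesOfMultiplicityGE (y : ι → G) (s : Finset ι) (j : ℕ) : Finset G :=
  {g ∈ s.image y | j ≤ #{i ∈ s | y i = g}}

theorem sum_mem_subsetSumsOfCardLE [AddCommMonoid G] {y : ι → G} {s T : Finset ι} {j : ℕ}
    (hT : T ⊆ s) (hTj : #T ≤ j) : ∑ i ∈ T, y i ∈ subsetSumsOfCardLE y s j :=
  mem_image.2 ⟨T, mem_filter.2 ⟨mem_powerset.2 hT, hTj⟩, rfl⟩

theorem exists_sum_eq_add_of_mem_valuesOfMultiplicityGE [AddCommMonoid G] [DecidableEq ι]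
    {y : ι → G} {s T : Finset ι} {j : ℕ} (hTs : T ⊆ s) (hTj : #T ≤ j) {g : G}
    (hg : g ∈ valuesOfMultiplicityGE y s (j + 1)) :
    ∃ T' ⊆ s, T'.Nonempty ∧ #T' ≤ j + 1 ∧ ∑ i ∈ T', y i = ∑ i ∈ T, y i + g := by
  have hlt : #{i ∈ T | y i = g} < #{i ∈ s | y i = g} :=
    (card_filter_le T _).trans_lt (hTj.trans_lt (mem_filter.1 hg).2)
  obtain ⟨i, hi, hiT⟩ := exists_mem_notMem_of_card_lt_card hlt
  simp only [mem_filter, not_and] at hi hiT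
  obtain ⟨his, rfl⟩ := hi
  have hiT : i ∉ T := fun h => hiT h rfl
  refine ⟨insert i T, insert_subset his hTs, insert_nonempty i T, ?_, ?_⟩
  · rw [card_insert_of_notMem hiT]
    omega
  · rw [sum_insert hiT, add_comm]

theorem sum_card_valuesOfMultiplicityGE (y : ι → G) (s : Finset ι) {c : ℕ}
    (hc : ∀ g, #{i ∈ s | y i = g} ≤ c) :
    ∑ j ∈ range c, #(valuesOfMultiplicityGE y s (j + 1)) = #s := by
  calc ∑ j ∈ range c, #(valuesOfMultiplicityGE y s (j + 1))
      = ∑ j ∈ range c, ∑ g ∈ s.image y, if j + 1 ≤ #{i ∈ s | y i = g} then 1 else 0 := by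
        simp only [valuesOfMultiplicityGE, card_filter]
    _ = ∑ g ∈ s.image y, #{j ∈ range c | j + 1 ≤ #{i ∈ s | y i = g}} := by
        rw [sum_comm]; simp only [card_filter]
    _ = ∑ g ∈ s.image y, #{i ∈ s | y i = g} := by
        refine sum_congr rfl fun g _ => ?_
        have hrange : {j ∈ range c | j + 1 ≤ #{i ∈ s | y i = g}} = range #{i ∈ s | y i = g} := by
          ext j
          have := hc g
          simp only [mem_filter, mem_range]
          omega
        rw [hrange, card_range]
    _ = #s := (card_eq_sum_card_image y s).symm

variable [AddCommGroup G] [DecidableEq ι] {y : ι → G} {s : Finset ι}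

theorem card_subsetSumsOfCardLE_add_card_valuesOfMultiplicityGE_le (hz : ∀ i ∈ s, y i ≠ 0)
    {j : ℕ} (hno : ∀ P ⊆ s, P.Nonempty → #P ≤ j + 1 → ∑ i ∈ P, y i ≠ 0) :
    #(subsetSumsOfCardLE y s j) + #(valuesOfMultiplicityGE y s (j + 1)) ≤
      #(subsetSumsOfCardLE y s (j + 1)) := by
  set B := insert 0 (valuesOfMultiplicityGE y s (j + 1))
  have hB : #B = #(valuesOfMultiplicityGE y s (j + 1)) + 1 := by
    refine card_insert_of_notMem fun h0 => ?_
    obtain ⟨i, hi, hyi⟩ := mem_image.1 (mem_filter.1 h0).1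
    exact hz i hi hyi
  have hsub : subsetSumsOfCardLE y s j + B ⊆ subsetSumsOfCardLE y s (j + 1) := by
    simp only [subset_iff, mem_add, subsetSumsOfCardLE, mem_image, mem_filter, mem_powerset]
    rintro _ ⟨_, ⟨T, ⟨hTs, hTj⟩, rfl⟩, g, hg, rfl⟩
    obtain rfl | hg := mem_insert.1 hg
    · exact ⟨T, ⟨hTs, hTj.trans j.le_succ⟩, (add_zero _).symm⟩
    · obtain ⟨T', hT's, -, hT'j, hT'sum⟩ :=
        exists_sum_eq_add_of_mem_valuesOfMultiplicityGE hTs hTj hg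
      exact ⟨T', ⟨hT's, hT'j⟩, hT'sum⟩
  have hunique : ∀ a ∈ subsetSumsOfCardLE y s j, ∀ g ∈ B, a + g = 0 → a = 0 := by
    intro a ha g hg hag
    obtain rfl | hg := mem_insert.1 hg
    · rwa [add_zero] at hag
    obtain ⟨T, hT, rfl⟩ := mem_image.1 ha
    obtain ⟨hTs, hTj⟩ := mem_filter.1 hT
    obtain ⟨T', hT's, hT'ne, hT'j, hT'sum⟩ :=
      exists_sum_eq_add_of_mem_valuesOfMultiplicityGE (mem_powerset.1 hTs) hTj hg
    exact absurd (hT'sum.trans hag) (hno T' hT's hT'ne hT'j)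
  have hscherk : #(subsetSumsOfCardLE y s j) + #B ≤ #(subsetSumsOfCardLE y s j + B) + 1 :=
    scherk (sum_mem_subsetSumsOfCardLE (empty_subset s) (Nat.zero_le j)) (mem_insert_self 0 _)
      hunique
  have hsub_card := card_le_card hsub
  omega

theorem one_add_sum_card_valuesOfMultiplicityGE_le (hz : ∀ i ∈ s, y i ≠ 0) {c : ℕ}
    (hno : ∀ P ⊆ s, P.Nonempty → #P ≤ c → ∑ i ∈ P, y i ≠ 0) :
    1 + ∑ j ∈ range c, #(valuesOfMultiplicityGE y s (j + 1)) ≤ #(subsetSumsOfCardLE y s c) := by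
  induction c with
  | zero => exact card_pos.2 ⟨0, by simpa using sum_mem_subsetSumsOfCardLE (empty_subset s) le_rfl⟩
  | succ c ih =>
    have hstep := card_subsetSumsOfCardLE_add_card_valuesOfMultiplicityGE_le hz hno
    have hprev := ih fun P hPs hP hPc => hno P hPs hP (hPc.trans c.le_succ)
    rw [sum_range_succ]
    omega

theorem exists_zero_sum_card_le_of_multiplicity_le [Fintype G] (hz : ∀ i ∈ s, y i ≠ 0)
    (hs : Fintype.card G ≤ #s) {c : ℕ} (hc : ∀ g, #{i ∈ s | y i = g} ≤ c) :
    ∃ P ⊆ s, P.Nonempty ∧ #P ≤ c ∧ ∑ i ∈ P, y i = 0 := by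
  by_contra! hno
  have hchain := one_add_sum_card_valuesOfMultiplicityGE_le hz hno
  rw [sum_card_valuesOfMultiplicityGE y s hc] at hchain
  have hcard_le := card_le_univ (subsetSumsOfCardLE y s c)
  omega

end Gao

section Extraction

variable {G ι : Type*} [AddCommMonoid G]

theorem exists_remainder_zero_sum_card_approx [DecidableEq ι] (y : ι → G) {n h : ℕ}
    {N : Finset ι}
    (hpiece : ∀ R ⊆ N, n ≤ #R → ∃ P ⊆ R, P.Nonempty ∧ #P ≤ h ∧ ∑ i ∈ P, y i = 0) :
    ∃ R ⊆ N, #R < n ∧ ∀ v, v + #R ≤ #N + h →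
      ∃ C ⊆ N \ R, ∑ i ∈ C, y i = 0 ∧ #C ≤ v ∧ v ≤ #C + h := by
  induction N using strongInduction with
  | H N ih =>
  by_cases hN : #N < n
  · refine ⟨N, Subset.rfl, hN, fun v hv => ⟨∅, empty_subset _, sum_empty, Nat.zero_le v, ?_⟩⟩
    rw [card_empty]
    omega
  obtain ⟨P, hPN, hP, hPh, hPsum⟩ := hpiece N Subset.rfl (not_lt.1 hN)
  obtain ⟨R, hRNP, hRn, hcover⟩ :=
    ih (N \ P) (sdiff_ssubset hPN hP) fun R hR => hpiece R (hR.trans sdiff_subset)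
  refine ⟨R, hRNP.trans sdiff_subset, hRn, fun v hv => ?_⟩
  have hNP : #(N \ P) = #N - #P := card_sdiff_of_subset hPN
  have hPle := card_le_card hPN
  have hRle := card_le_card hRNP
  have hCsub : (N \ P) \ R ⊆ N \ R := sdiff_subset_sdiff sdiff_subset Subset.rfl
  by_cases hvNP : v + #R ≤ #(N \ P) + h
  · obtain ⟨C, hC, hCsum, hCv, hvC⟩ := hcover v hvNP
    exact ⟨C, hC.trans hCsub, hCsum, hCv, hvC⟩
  obtain ⟨C, hC, hCsum, hCv, hvC⟩ := hcover (v - #P) (by omega)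
  have hCP : Disjoint C P := disjoint_of_subset_left (hC.trans sdiff_subset) sdiff_disjoint
  have hPR : P ⊆ N \ R := fun i hi =>
    mem_sdiff.2 ⟨hPN hi, fun hiR => (mem_sdiff.1 (hRNP hiR)).2 hi⟩
  refine ⟨C ∪ P, union_subset (hC.trans hCsub) hPR, ?_, ?_, ?_⟩
  · rw [sum_union hCP, hCsum, hPsum, add_zero]
  all_goals rw [card_union_of_disjoint hCP]; omega

theorem exists_zero_sum_card_eq_of_forall_eq_zero [DecidableEq ι] {y : ι → G} {C Z : Finset ι}
    (hC : ∑ i ∈ C, y i = 0) (hZ : ∀ i ∈ Z, y i = 0) (hCZ : Disjoint C Z) {v : ℕ}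
    (hCv : #C ≤ v) (hvC : v ≤ #C + #Z) : ∃ u ⊆ C ∪ Z, #u = v ∧ ∑ i ∈ u, y i = 0 := by
  obtain ⟨Z', hZ'Z, hZ'⟩ := exists_subset_card_eq (s := Z) (n := v - #C) (by omega)
  have hCZ' : Disjoint C Z' := disjoint_of_subset_right hZ'Z hCZ
  refine ⟨C ∪ Z', union_subset_union Subset.rfl hZ'Z, ?_, ?_⟩
  · rw [card_union_of_disjoint hCZ', hZ']
    omega
  · rw [sum_union hCZ', hC, sum_eq_zero fun i hi => hZ i (hZ'Z hi), add_zero]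

theorem exists_zero_sum_card_le_of_davenport {D : ℕ}
    (hD : ∀ x : Fin D → G, ∃ s : Finset (Fin D), s.Nonempty ∧ ∑ i ∈ s, x i = 0)
    (y : ι → G) {R : Finset ι} (hR : D ≤ #R) :
    ∃ P ⊆ R, P.Nonempty ∧ #P ≤ D ∧ ∑ i ∈ P, y i = 0 := by
  let e : Fin D ↪ ι :=
    (Fin.castLEEmb hR).trans (R.equivFin.symm.toEmbedding.trans (Function.Embedding.subtype _))
  obtain ⟨s, hs, hsum⟩ := hD (y ∘ e)
  refine ⟨s.map e, fun i hi => ?_, hs.map, ?_, by rwa [sum_map]⟩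
  · obtain ⟨a, -, rfl⟩ := mem_map.1 hi
    exact (R.equivFin.symm _).2
  · rw [card_map]
    exact (card_le_univ s).trans (Fintype.card_fin D).le

end Extraction

section ZeroMostFrequent

variable {G ι : Type*} [AddCommGroup G] [Fintype G] [DecidableEq G] [Fintype ι] [DecidableEq ι]
  {y : ι → G}

theorem exists_remainder_zero_sum_card_eq_of_zero_most_frequent
    (hmax : ∀ g, #{i | y i = g} ≤ #{i | y i = 0}) :
    ∃ R : Finset ι, #R < Fintype.card G ∧ ∀ v, v + #R ≤ Fintype.card ι →
      ∃ u, Disjoint u R ∧ #u = v ∧ ∑ i ∈ u, y i = 0 := by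
  set Z : Finset ι := {i | y i = 0}
  set N : Finset ι := {i | y i ≠ 0}
  have hZN : #N + #Z = Fintype.card ι := by
    rw [add_comm]
    exact card_filter_add_card_filter_not _
  obtain ⟨R, hRN, hRG, hcover⟩ := exists_remainder_zero_sum_card_approx y (N := N) (h := #Z)
    fun R hRN hR => exists_zero_sum_card_le_of_multiplicity_le
      (fun i hi => (mem_filter.1 (hRN hi)).2) hR
      fun g => (card_le_card (filter_subset_filter _ (subset_univ R))).trans (hmax g)
  refine ⟨R, hRG, fun v hv => ?_⟩
  obtain ⟨C, hCNR, hCsum, hCv, hvC⟩ := hcover v (by omega)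
  have hCN : C ⊆ N := hCNR.trans sdiff_subset
  obtain ⟨u, hu, huv, husum⟩ := exists_zero_sum_card_eq_of_forall_eq_zero hCsum
    (fun i hi => (mem_filter.1 hi).2)
    (disjoint_filter_filter_not univ univ (y · = 0) |>.symm.mono_left hCN) hCv hvC
  refine ⟨u, disjoint_of_subset_left hu (disjoint_union_left.2 ⟨?_, ?_⟩), huv, husum⟩
  · exact disjoint_of_subset_left hCNR sdiff_disjoint
  · exact (disjoint_filter_filter_not univ univ (y · = 0)).mono_right hRN

theorem exists_zero_sum_card_eq_of_zero_most_frequent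
    (hmax : ∀ g, #{i | y i = g} ≤ #{i | y i = 0}) {D : ℕ}
    (hD : ∀ x : Fin D → G, ∃ s : Finset (Fin D), s.Nonempty ∧ ∑ i ∈ s, x i = 0)
    (hGD : Fintype.card G + D ≤ Fintype.card ι + 1) {K : ℕ} (hK : K + D ≤ Fintype.card ι + 1) :
    ∃ u : Finset ι, #u = K ∧ ∑ i ∈ u, y i = 0 := by
  obtain ⟨R, hRG, hcover⟩ := exists_remainder_zero_sum_card_eq_of_zero_most_frequent hmax
  by_cases hKR : K + #R ≤ Fintype.card ι
  · obtain ⟨u, -, hu⟩ := hcover K hKR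
    exact ⟨u, hu⟩
  obtain ⟨R', -, hR'D, hcover'⟩ := exists_remainder_zero_sum_card_approx y (N := R)
    fun _ _ hD' => exists_zero_sum_card_le_of_davenport hD y hD'
  -- `U ⊆ R` supplies the at least `K + #R - |ι|` terms that blocks and zeros outside `R` cannot.
  obtain ⟨U, hUR, hUsum, hUv, hvU⟩ := hcover' (K + #R + D - Fintype.card ι) (by omega)
  obtain ⟨u, huR, hu, husum⟩ := hcover (K - #U) (by omega)
  have huU : Disjoint u U := huR.mono_right (hUR.trans sdiff_subset)
  refine ⟨u ∪ U, ?_, ?_⟩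
  · rw [card_union_of_disjoint huU]
    omega
  · rw [sum_union huU, husum, hUsum, add_zero]

end ZeroMostFrequent

end Finset

/-- Theorem YZ, second part: for every sequence `S` of length `|S| ≥ n + D(G) - 1`,
`0 ∈ Σ_{km}(S)` for every `1 ≤ k ≤ (|S| + 1 - D(G))/m`, where `m` is the exponent. -/
theorem yz_exponent {G : Type*} [AddCommGroup G] [Fintype G]
    (n : ℕ) (hn : n = Fintype.card G)
    (m : ℕ) (hm : m = AddMonoid.exponent G)
    (D : ℕ)
    (hD : IsLeast {k : ℕ | ∀ y : Fin k → G, ∃ s : Finset (Fin k),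
      s.Nonempty ∧ ∑ i ∈ s, y i = 0} D)
    (t : ℕ) (x : Fin t → G) (ht : n + D - 1 ≤ t) :
    ∀ k : ℕ, 1 ≤ k → k * m + D ≤ t + 1 →
      ∃ u : Finset (Fin t), u.card = k * m ∧ ∑ i ∈ u, x i = 0 := by
  classical
  intro k _ hk
  obtain ⟨g, -, hg⟩ := exists_max_image univ (fun g => #{i | x i = g}) univ_nonempty
  have hmax : ∀ a, #{i | x i - g = a} ≤ #{i | x i - g = 0} := fun a => by
    simpa only [sub_eq_iff_eq_add, zero_add] using hg (a + g) (mem_univ _)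
  have hGD : Fintype.card G + D ≤ Fintype.card (Fin t) + 1 := by
    have hG := Fintype.card_pos (α := G)
    rw [Fintype.card_fin]
    omega
  obtain ⟨u, hu, hsum⟩ := exists_zero_sum_card_eq_of_zero_most_frequent hmax hD.1 hGD
    (K := k * m) (by rwa [Fintype.card_fin])
  refine ⟨u, hu, ?_⟩
  have hmg : (k * m) • g = 0 := by rw [mul_nsmul', hm, AddMonoid.exponent_nsmul_eq_zero, smul_zero]
  rwa [sum_sub_distrib, sum_const, hu, hmg, sub_zero] at hsum
end

section
/- Let n be a positive integer, A a nonempty finite set of integers, and suppose H is a subgroup of ℤ/nℤ such that for elements x_1,...,x_r of ℤ/nℤ, the subgroup H_1 generated by x_1,...,x_r satisfies a·H_1 = H for some a ∈ A with A·x_i = {a·x_i} for each i. Then D_A(H_1) ≥ D(H) = |H|, where D_A(H_1) is the weighted Davenport constant of H_1 with weight set A and D(H) is the classical Davenport constant of H. -/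
/-!
Every `y ∈ H` is `a • z` with `z ∈ H₁`, and on `H₁` each weight `b ∈ A` acts as `a` (it does so on
the generators `xᵢ`). Hence an `A`-weighted zero sum of the `z`'s is a plain zero sum of the `y`'s,
and `D(H) ≤ D_A(H₁)`. For the cyclic group `H`, two of the `|H| + 1` prefix sums of a sequence of
length `|H|` coincide, while `|H| - 1` copies of a generator have no zero-sum subsequence.
-/

open Finset

section ZeroSum

variable {G : Type*} [AddCommGroup G]

theorem exists_zero_sum_of_card_le [Finite G] {k : ℕ} (hk : Nat.card G ≤ k) (y : Fin k → G) :
    ∃ s : Finset (Fin k), s.Nonempty ∧ ∑ i ∈ s, y i = 0 := by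
  have := Fintype.ofFinite G
  let prefixes (j : Fin (k + 1)) : Finset (Fin k) := {i | (i : ℕ) < j}
  have hcard : Fintype.card G < Fintype.card (Fin (k + 1)) := by
    rw [← Nat.card_eq_fintype_card, Fintype.card_fin]; omega
  obtain ⟨j, l, hne, heq⟩ :=
    Fintype.exists_ne_map_eq_of_card_lt (fun j => ∑ i ∈ prefixes j, y i) hcard
  wlog hjl : j < l generalizing j l
  · exact this l j hne.symm heq.symm (lt_of_le_of_ne (not_lt.1 hjl) hne.symm)
  have hsub : prefixes j ⊆ prefixes l := fun i hi => by
    simp only [prefixes, mem_filter, mem_univ, true_and] at hi ⊢; omega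
  refine ⟨prefixes l \ prefixes j, ⟨⟨j, by omega⟩, by simp [prefixes, hjl]⟩, ?_⟩
  simpa [heq] using sum_sdiff (f := y) hsub

theorem card_le_of_forall_exists_zero_sum [Finite G] [IsAddCyclic G] {k : ℕ}
    (h : ∀ y : Fin k → G, ∃ s : Finset (Fin k), s.Nonempty ∧ ∑ i ∈ s, y i = 0) :
    Nat.card G ≤ k := by
  obtain ⟨g, hg⟩ := IsAddCyclic.exists_generator (α := G)
  obtain ⟨s, hs, hsum⟩ := h fun _ => g
  rw [sum_const] at hsum
  calc Nat.card G = addOrderOf g := (addOrderOf_eq_card_of_forall_mem_zmultiples hg).symm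
    _ ≤ #s := addOrderOf_le_of_nsmul_eq_zero hs.card_pos hsum
    _ ≤ k := card_le_univ s |>.trans_eq (Fintype.card_fin k)

theorem isLeast_card_zero_sum_length [Finite G] [IsAddCyclic G] :
    IsLeast {k : ℕ | ∀ y : Fin k → G, ∃ s : Finset (Fin k), s.Nonempty ∧ ∑ i ∈ s, y i = 0}
      (Nat.card G) :=
  ⟨fun y => exists_zero_sum_of_card_le le_rfl y, fun _ hk => card_le_of_forall_exists_zero_sum hk⟩

end ZeroSum

theorem zsmul_eq_zsmul_of_mem_closure {G : Type*} [AddCommGroup G] {S : Set G} {a b : ℤ}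
    (hS : ∀ x ∈ S, b • x = a • x) {g : G} (hg : g ∈ AddSubgroup.closure S) : b • g = a • g := by
  induction hg using AddSubgroup.closure_induction with
  | mem x hx => exact hS x hx
  | zero => simp
  | add x y _ _ hx hy => simp only [smul_add, hx, hy]
  | neg x _ hx => simp only [smul_neg, hx]

theorem exists_zero_sum_of_forall_exists_weighted_zero_sum {G : Type*} [AddCommGroup G]
    {K H : AddSubgroup G} {A : Set ℤ} {a : ℤ} (hA : ∀ b ∈ A, ∀ g ∈ K, b • g = a • g)
    (hH : (H : Set G) ⊆ (a • ·) '' K) {k : ℕ}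
    (hK : ∀ z : Fin k → K, ∃ (s : Finset (Fin k)) (w : Fin k → ℤ),
      s.Nonempty ∧ (∀ i ∈ s, w i ∈ A) ∧ ∑ i ∈ s, w i • (z i : G) = 0)
    (y : Fin k → H) : ∃ s : Finset (Fin k), s.Nonempty ∧ ∑ i ∈ s, (y i : G) = 0 := by
  choose z hz using fun i => hH (y i).2
  obtain ⟨s, w, hs, hw, hsum⟩ := hK fun i => ⟨z i, (hz i).1⟩
  refine ⟨s, hs, ?_⟩
  rw [← hsum]
  refine sum_congr rfl fun i hi => ?_
  rw [hA _ (hw i hi) _ (hz i).1]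
  exact (hz i).2.symm

theorem claim_DA_ge_DH_general (n : ℕ) (hn : 0 < n) (A : Finset ℤ)
    (r : ℕ) (x : Fin r → ZMod n) (a : ℤ)
    (hsingle : ∀ i, ∀ b ∈ A, b • x i = a • x i)
    (H : AddSubgroup (ZMod n))
    (hH : (H : Set (ZMod n)) =
      (fun g => a • g) '' (AddSubgroup.closure (Set.range x) : Set (ZMod n)))
    (DA DH : ℕ)
    (hDA : IsLeast {k : ℕ |
      ∀ y : Fin k → (AddSubgroup.closure (Set.range x) : AddSubgroup (ZMod n)),
      ∃ (s : Finset (Fin k)) (w : Fin k → ℤ),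
        s.Nonempty ∧ (∀ i ∈ s, w i ∈ A) ∧ ∑ i ∈ s, w i • (y i : ZMod n) = 0} DA)
    (hDH : IsLeast {k : ℕ | ∀ y : Fin k → H, ∃ s : Finset (Fin k),
      s.Nonempty ∧ ∑ i ∈ s, (y i : ZMod n) = 0} DH) :
    DA ≥ DH ∧ DH = Nat.card H := by
  have : NeZero n := ⟨hn.ne'⟩
  have hA : ∀ b ∈ A, ∀ g ∈ AddSubgroup.closure (Set.range x), b • g = a • g := fun b hb _ =>
    zsmul_eq_zsmul_of_mem_closure (Set.forall_mem_range.2 fun i => hsingle i b hb)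
  refine ⟨hDH.2 (exists_zero_sum_of_forall_exists_weighted_zero_sum hA hH.subset hDA.1),
    hDH.unique ?_⟩
  simpa only [← AddSubgroup.val_finsetSum, ZeroMemClass.coe_eq_zero] using
    isLeast_card_zero_sum_length (G := H)

/-- The Claim: `D_A(H₁) ≥ D(H) = |H|`, where `H₁ = ⟨x₁,...,x_r⟩`, `H = a·H₁`,
`a ∈ A` and `A·x_i = {a·x_i}` for each `i`. -/
theorem claim_DA_ge_DH (n : ℕ) (hn : 0 < n) (A : Finset ℤ) (hA : A.Nonempty)
    (r : ℕ) (x : Fin r → ZMod n) (a : ℤ) (ha : a ∈ A)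
    (hsingle : ∀ i, ∀ b ∈ A, b • x i = a • x i)
    (H : AddSubgroup (ZMod n))
    (hH : (H : Set (ZMod n)) =
      (fun g => a • g) '' (AddSubgroup.closure (Set.range x) : Set (ZMod n)))
    (DA DH : ℕ)
    (hDA : IsLeast {k : ℕ |
      ∀ y : Fin k → (AddSubgroup.closure (Set.range x) : AddSubgroup (ZMod n)),
      ∃ (s : Finset (Fin k)) (w : Fin k → ℤ),
        s.Nonempty ∧ (∀ i ∈ s, w i ∈ A) ∧ ∑ i ∈ s, w i • (y i : ZMod n) = 0} DA)
    (hDH : IsLeast {k : ℕ | ∀ y : Fin k → H, ∃ s : Finset (Fin k),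
      s.Nonempty ∧ ∑ i ∈ s, (y i : ZMod n) = 0} DH) :
    DA ≥ DH ∧ DH = Nat.card H :=
  claim_DA_ge_DH_general n hn A r x a hsingle H hH DA DH hDA hDH
end
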